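/- The skew-symmetric bilinear map φ_1 on the 5-dimensional Heisenberg Lie algebra h_2, defined on basis vectors by φ_1(e_1,e_3) = 2e_2 − 2e_3, φ_1(e_1,e_4) = e_3, φ_1(e_2,e_4) = e_2, φ_1(e_3,e_4) = 2e_3 − e_2, and zero on all other pairs of basis vectors, is a 2-cocycle with adjoint coefficients. -/

import Mathlib

noncomputable section

/-- The underlying space of the 5-dimensional Heisenberg Lie algebra `h₂`. -/
abbrev V : Type := Fin 5 → ℝ

/-- Basis vectors: `e 0, …, e 4` are `e₁, …, e₅`. -/
def e (i : Fin 5) : V := Pi.single i 1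

/-- The Heisenberg bracket on `h₂`: `[e₁,e₃] = e₅`, `[e₂,e₄] = e₅`. -/
def br (x y : V) : V :=
  (x 0 * y 2 - x 2 * y 0 + x 1 * y 3 - x 3 * y 1) • e 4

/-- The deformed bracket `[x,y]_t = [x,y] + t • φ x y`. -/
def brt (t : ℝ) (φ : V → V → V) (x y : V) : V := br x y + t • φ x y

/-- The Chevalley–Eilenberg 2-cocycle condition (adjoint coefficients) for a
skew-symmetric 2-cochain `φ` on `h₂`. -/
def IsCocycle (φ : V → V → V) : Prop :=
  ∀ x y z : V,
    φ (br x y) z - φ (br x z) y + φ (br y z) x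
      - br x (φ y z) + br y (φ x z) - br z (φ x y) = 0

/-- The 2-cochain `φ₁`: `φ₁(e₁,e₃) = 2e₂ − 2e₃`, `φ₁(e₁,e₄) = e₃`, `φ₁(e₂,e₄) = e₂`, `φ₁(e₃,e₄) = 2e₃ − e₂`, zero on other basis pairs. -/
def phi1 (x y : V) : V :=
  (x 0 * y 2 - x 2 * y 0) • ((2:ℝ) • e 1 - (2:ℝ) • e 2)
  + (x 0 * y 3 - x 3 * y 0) • e 2
  + (x 1 * y 3 - x 3 * y 1) • e 1
  + (x 2 * y 3 - x 3 * y 2) • ((2:ℝ) • e 2 - e 1)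

/-! The bracket of `h₂` is central, `φ₁` takes values in `span {e₂, e₃}` and ignores the
`e₅`-coordinate. Hence every term `φ₁([x,y],z)` vanishes, and the three terms `[x, φ₁(y,z)]` are
multiples of `e₅` whose coefficients add up to the alternation of the trilinear form
`z₁ φ₁(x,y)₃ − z₄ φ₁(x,y)₂`. Only two monomials survive this alternation,
`2 e¹∧e³∧e⁴` (from `φ₁(e₃,e₄)`) and `−2 e¹∧e³∧e⁴` (from `φ₁(e₁,e₃)`), and they cancel. -/

lemma br_apply_of_ne_four (x y : V) {i : Fin 5} (hi : i ≠ 4) : br x y i = 0 := by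
  simp [br, e, hi]

lemma phi1_br_left (x y z : V) : phi1 (br x y) z = 0 := by
  simp [phi1, br_apply_of_ne_four]

lemma br_eq_of_apply_zero_of_apply_three (z w : V) (h₀ : w 0 = 0) (h₃ : w 3 = 0) :
    br z w = (z 0 * w 2 - z 3 * w 1) • e 4 := by
  rw [br, h₀, h₃]
  ring_nf

lemma phi1_apply_zero (x y : V) : phi1 x y 0 = 0 := by
  simp [phi1, e]

lemma phi1_apply_three (x y : V) : phi1 x y 3 = 0 := by
  simp [phi1, e]

lemma phi1_apply_one (x y : V) :
    phi1 x y 1 = 2 * (x 0 * y 2 - x 2 * y 0) + (x 1 * y 3 - x 3 * y 1)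
      - (x 2 * y 3 - x 3 * y 2) := by
  simp only [phi1, e, Pi.add_apply, Pi.sub_apply, Pi.smul_apply, Pi.single_apply, smul_eq_mul,
    Fin.reduceEq, if_true, if_false]
  ring

lemma phi1_apply_two (x y : V) :
    phi1 x y 2 = -2 * (x 0 * y 2 - x 2 * y 0) + (x 0 * y 3 - x 3 * y 0)
      + 2 * (x 2 * y 3 - x 3 * y 2) := by
  simp only [phi1, e, Pi.add_apply, Pi.sub_apply, Pi.smul_apply, Pi.single_apply, smul_eq_mul,
    Fin.reduceEq, if_true, if_false]
  ring

lemma br_phi1 (x y z : V) : br z (phi1 x y) = (z 0 * phi1 x y 2 - z 3 * phi1 x y 1) • e 4 :=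
  br_eq_of_apply_zero_of_apply_three z _ (phi1_apply_zero x y) (phi1_apply_three x y)

/-- `φ₁` is a 2-cocycle of `h₂` with adjoint coefficients. -/
theorem phi1_isCocycle : IsCocycle phi1 := by
  intro x y z
  simp only [phi1_br_left, br_phi1]
  have coeff_eq_zero : -(x 0 * phi1 y z 2 - x 3 * phi1 y z 1)
      + (y 0 * phi1 x z 2 - y 3 * phi1 x z 1) - (z 0 * phi1 x y 2 - z 3 * phi1 x y 1) = 0 := by
    simp only [phi1_apply_one, phi1_apply_two]
    ring
  calc _ = (-(x 0 * phi1 y z 2 - x 3 * phi1 y z 1) + (y 0 * phi1 x z 2 - y 3 * phi1 x z 1)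
        - (z 0 * phi1 x y 2 - z 3 * phi1 x y 1)) • e 4 := by module
    _ = 0 := by rw [coeff_eq_zero, zero_smul]

end
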